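/- Consider the interference channel of Proposition 2: let N < M ≤ 2N be positive integers, let H₂₁ ∈ ℂ^{N×M} have rank N (so dim ker(H₂₁) = M − N), let H₁₂, H₂₂ ∈ ℂ^{N×M}, let σ > 0, and let D₁ ∈ ℂ^{M×M} be a diagonal positive semidefinite matrix (the primary input covariance). Define the Hermitian positive definite matrix S_ξ = H₁₂ D₁ H₁₂ᴴ + σ² I_N, let W ∈ ℂ^{M×(M−N)} be any matrix with orthonormal columns spanning ker(H₂₁), let G = S_ξ^{−1/2} H₂₂ W, let λ_1 ≥ … ≥ λ_{M−N} ≥ 0 be the eigenvalues of Gᴴ G with λ_1 > 0, let P > 0, and let p_i = max(μ − 1/λ_i, 0) (with p_i = 0 when λ_i = 0) be the water-filling allocation with μ > 0 chosen so that Σ_i p_i = P. Then: (i) for every M × M Hermitian positive semidefinite matrix S₂ with H₂₁ S₂ = 0 and trace(S₂) ≤ P, one has det( I_N + S_ξ^{−1/2} H₂₂ S₂ H₂₂ᴴ S_ξ^{−1/2} ) ≤ Π_{i=1}^{M−N} (1 + p_i λ_i); and (ii) there exists a semi-unitary matrix Z* ∈ ℂ^{M×(M−N)} (satisfying Z*ᴴ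 Z* = I_{M−N}) with H₂₁ Z* = 0 such that S₂* = Z* diag(p_1,…,p_{M−N}) Z*ᴴ satisfies trace(S₂*) ≤ P and attains equality in (i). Hence a semi-unitary null-space precoder is optimal for the spectral efficiency of the secondary link under the interference cancellation constraint. -/

import Mathlib

open Matrix ComplexOrder

/-!
Restricted to the null space of `H₂₁`, spanned by the orthonormal columns of `W`, an admissible
covariance is `S₂ = W Q Wᴴ` with `Q ⪰ 0` and `tr Q = tr S₂`. Sylvester's identity
`det (1 + X Y) = det (1 + Y X)` turns the objective into `det (1 + R Λ)`, where `Λ` is the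
diagonal matrix of eigenvalues of `Gᴴ G` and `R` is `Q` written in an eigenbasis of `Gᴴ G`.
Hadamard's inequality bounds this by `∏ (1 + λᵢ Rᵢᵢ)`, and the water-filling inequality bounds
the product, under `∑ Rᵢᵢ ≤ P`, by `∏ (1 + pᵢ λᵢ)`. Choosing `R = diag p` in that eigenbasis,
i.e. `Z = W V` with `V` the eigenvector matrix, attains the bound.
-/

theorem prod_le_one_of_sum_le_card {ι : Type*} [Fintype ι] {z : ι → ℝ} (hz : ∀ i, 0 ≤ z i)
    (hsum : ∑ i, z i ≤ Fintype.card ι) : ∏ i, z i ≤ 1 :=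
  calc ∏ i, z i ≤ ∏ i, Real.exp (z i - 1) :=
        Finset.prod_le_prod (fun i _ => hz i) fun i _ => by linarith [Real.add_one_le_exp (z i - 1)]
    _ = Real.exp (∑ i, z i - Fintype.card ι) := by simp [← Real.exp_sum, Finset.sum_sub_distrib]
    _ ≤ 1 := Real.exp_le_one_iff.mpr (by linarith)

/-- The power given to a channel of gain `g` when the noise levels `1 / g` are filled up to
the water level `μ`. -/
noncomputable def waterFilling (μ g : ℝ) : ℝ := if 0 < g then max (μ - 1 / g) 0 else 0

theorem waterFilling_nonneg (μ g : ℝ) : 0 ≤ waterFilling μ g := by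
  unfold waterFilling; split_ifs <;> simp

/-- Concavity of `q ↦ log (1 + g q)` at the water-filling power, where the slope is `1 / μ` if
that power is positive and at most `1 / μ` otherwise. -/
theorem one_add_mul_le_one_add_waterFilling_mul_mul_exp {μ g q : ℝ} (hμ : 0 < μ) (hg : 0 ≤ g)
    (hq : 0 ≤ q) :
    1 + g * q ≤ (1 + waterFilling μ g * g) * Real.exp ((q - waterFilling μ g) / μ) := by
  set w := waterFilling μ g
  have hw : 0 ≤ w := waterFilling_nonneg μ g
  suffices h : 1 + g * q ≤ (1 + w * g) * (1 + (q - w) / μ) by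
    nlinarith [Real.add_one_le_exp ((q - w) / μ), mul_nonneg hw hg]
  rcases hg.eq_or_lt with rfl | hg
  · have hw0 : w = 0 := by simp [w, waterFilling]
    rw [hw0]
    simpa using div_nonneg hq hμ.le
  rcases le_total (μ - 1 / g) 0 with hlow | hhigh
  · have hw0 : w = 0 := by simp only [w, waterFilling, if_pos hg, max_eq_right hlow]
    have : g * μ ≤ 1 := by rw [sub_nonpos, le_div_iff₀ hg] at hlow; linarith
    rw [hw0]
    field_simp
    nlinarith
  · have hw' : w = μ - 1 / g := by simp only [w, waterFilling, if_pos hg, max_eq_left hhigh]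
    apply le_of_eq
    rw [hw']
    field_simp
    ring

theorem prod_one_add_mul_le_prod_one_add_waterFilling {ι : Type*} [Fintype ι] {μ : ℝ}
    (hμ : 0 < μ) {g q : ι → ℝ} (hg : ∀ i, 0 ≤ g i) (hq : ∀ i, 0 ≤ q i)
    (hsum : ∑ i, q i ≤ ∑ i, waterFilling μ (g i)) :
    ∏ i, (1 + g i * q i) ≤ ∏ i, (1 + waterFilling μ (g i) * g i) := by
  have hpos : ∀ i, 0 ≤ 1 + waterFilling μ (g i) * g i := fun i => by
    nlinarith [waterFilling_nonneg μ (g i), hg i]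
  calc ∏ i, (1 + g i * q i)
      ≤ ∏ i, ((1 + waterFilling μ (g i) * g i) * Real.exp ((q i - waterFilling μ (g i)) / μ)) :=
        Finset.prod_le_prod (fun i _ => by nlinarith [hg i, hq i])
          fun i _ => one_add_mul_le_one_add_waterFilling_mul_mul_exp hμ (hg i) (hq i)
    _ = (∏ i, (1 + waterFilling μ (g i) * g i)) *
          Real.exp ((∑ i, q i - ∑ i, waterFilling μ (g i)) / μ) := by
        rw [Finset.prod_mul_distrib, ← Real.exp_sum, ← Finset.sum_div, Finset.sum_sub_distrib]
    _ ≤ ∏ i, (1 + waterFilling μ (g i) * g i) :=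
        mul_le_of_le_one_right (Finset.prod_nonneg fun i _ => hpos i)
          (Real.exp_le_one_iff.mpr (div_nonpos_of_nonpos_of_nonneg (by linarith) hμ.le))

namespace Matrix

section Determinant

variable {𝕜 n : Type*} [RCLike 𝕜] [Fintype n] [DecidableEq n]

theorem PosSemidef.re_det_le_one_of_diag_eq_one {B : Matrix n n 𝕜} (hB : B.PosSemidef)
    (hdiag : ∀ i, B i i = 1) : RCLike.re B.det ≤ 1 := by
  have htrace : ∑ i, hB.1.eigenvalues i = Fintype.card n := by
    have := congrArg RCLike.re hB.1.trace_eq_sum_eigenvalues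
    simpa [trace, hdiag] using this.symm
  rw [hB.1.det_eq_prod_eigenvalues, ← RCLike.ofReal_prod, RCLike.ofReal_re]
  exact prod_le_one_of_sum_le_card hB.eigenvalues_nonneg htrace.le

/-- Hadamard's inequality. -/
theorem PosDef.re_det_le_prod_re_diag {A : Matrix n n 𝕜} (hA : A.PosDef) :
    RCLike.re A.det ≤ ∏ i, RCLike.re (A i i) := by
  set d : n → ℝ := fun i => RCLike.re (A i i)
  have hd : ∀ i, 0 < d i := fun i => (RCLike.pos_iff.mp hA.diag_pos).1
  have hAd : ∀ i, A i i = d i := fun i => (hA.isHermitian.coe_re_apply_self i).symm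
  set D : Matrix n n 𝕜 := diagonal fun i => ((Real.sqrt (d i))⁻¹ : ℝ)
  have hDD : Dᴴ = D := by simp [D]
  have hB : (Dᴴ * A * D).PosSemidef := hA.posSemidef.conjTranspose_mul_mul_same D
  rw [hDD] at hB
  have hdiag : ∀ i, (D * A * D) i i = 1 := fun i => by
    have hs : (Real.sqrt (d i) : 𝕜) ≠ 0 := by exact_mod_cast (Real.sqrt_pos.mpr (hd i)).ne'
    have hsq : ((Real.sqrt (d i) : ℝ) : 𝕜) ^ 2 = d i := by exact_mod_cast Real.sq_sqrt (hd i).le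
    simp only [D, mul_diagonal, diagonal_mul, hAd, ← hsq]
    push_cast
    field_simp
  have hdet : (D * A * D).det = A.det * ((∏ i, d i)⁻¹ : ℝ) := by
    have hsq : ∀ i, (Real.sqrt (d i) : 𝕜) * Real.sqrt (d i) = d i := fun i => by
      exact_mod_cast Real.mul_self_sqrt (hd i).le
    simp only [D, det_mul, det_diagonal]
    push_cast
    rw [mul_comm _ A.det, mul_assoc, ← Finset.prod_mul_distrib, ← Finset.prod_inv_distrib]
    simp only [← mul_inv, hsq]
  have := hB.re_det_le_one_of_diag_eq_one hdiag
  rw [hdet, RCLike.re_mul_ofReal] at this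
  rwa [← div_eq_mul_inv, div_le_one (Finset.prod_pos fun i _ => hd i)] at this

theorem PosSemidef.re_det_one_add_mul_diagonal_le {R : Matrix n n 𝕜} (hR : R.PosSemidef)
    {d : n → ℝ} (hd : ∀ i, 0 ≤ d i) :
    RCLike.re (1 + R * diagonal fun i => (d i : 𝕜)).det ≤ ∏ i, (1 + d i * RCLike.re (R i i)) := by
  set S : Matrix n n 𝕜 := diagonal fun i => (Real.sqrt (d i) : 𝕜)
  have hSS : S * S = diagonal fun i => (d i : 𝕜) := by
    simp only [S, diagonal_mul_diagonal, ← RCLike.ofReal_mul, Real.mul_self_sqrt (hd _)]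
  have hSh : Sᴴ = S := by simp [S]
  have hSRS : (S * R * S).PosSemidef := by
    simpa only [hSh] using hR.conjTranspose_mul_mul_same S
  rw [← hSS, ← Matrix.mul_assoc, det_one_add_mul_comm, ← Matrix.mul_assoc]
  refine ((PosDef.one.add_posSemidef hSRS).re_det_le_prod_re_diag).trans_eq
    (Finset.prod_congr rfl fun i _ => ?_)
  have hRi : R i i = (RCLike.re (R i i) : 𝕜) := (hR.isHermitian.coe_re_apply_self i).symm
  have hsq : (Real.sqrt (d i) : 𝕜) * Real.sqrt (d i) = d i := by
    exact_mod_cast Real.mul_self_sqrt (hd i)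
  simp only [S, add_apply, one_apply_eq, mul_diagonal, diagonal_mul]
  rw [hRi, mul_right_comm, hsq]
  norm_cast

theorem PosSemidef.re_det_one_add_mul_diagonal_le_waterFilling {R : Matrix n n 𝕜}
    (hR : R.PosSemidef) {μ : ℝ} (hμ : 0 < μ) {g : n → ℝ} (hg : ∀ i, 0 ≤ g i)
    (htrace : RCLike.re R.trace ≤ ∑ i, waterFilling μ (g i)) :
    RCLike.re (1 + R * diagonal fun i => (g i : 𝕜)).det ≤
      ∏ i, (1 + waterFilling μ (g i) * g i) :=
  (hR.re_det_one_add_mul_diagonal_le hg).trans <|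
    prod_one_add_mul_le_prod_one_add_waterFilling hμ hg
      (fun i => (RCLike.nonneg_iff.mp hR.diag_nonneg).1)
      (by simpa only [trace, diag_apply, map_sum] using htrace)

end Determinant

theorem det_one_add_mul_mul_conjTranspose {R k n : Type*} [CommRing R] [StarRing R]
    [Fintype k] [DecidableEq k] [Fintype n] [DecidableEq n]
    (F : Matrix k n R) (Q : Matrix n n R) :
    (1 + F * Q * Fᴴ).det = (1 + Q * (Fᴴ * F)).det := by
  rw [Matrix.mul_assoc, det_one_add_mul_comm, Matrix.mul_assoc]

theorem range_mulVecLin_le_ker_mulVecLin_iff {R l m n : Type*} [CommRing R] [Fintype m]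
    [Fintype n] [DecidableEq n] {A : Matrix l m R} {B : Matrix m n R} :
    LinearMap.range B.mulVecLin ≤ LinearMap.ker A.mulVecLin ↔ A * B = 0 := by
  rw [LinearMap.range_le_ker_iff, ← mulVecLin_mul, ← toLin'_apply', LinearEquiv.map_eq_zero_iff]

section Unitary

variable {𝕜 k l m n : Type*} [RCLike 𝕜] [Fintype l] [Fintype m] [Fintype n]

theorem mul_conjTranspose_mul_eq_self_of_mul_eq_zero [DecidableEq l] [DecidableEq m]
    [DecidableEq n] {W : Matrix m l 𝕜} {H : Matrix k m 𝕜} {S : Matrix m n 𝕜} (hW : Wᴴ * W = 1)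
    (hker : LinearMap.ker H.mulVecLin ≤ LinearMap.range W.mulVecLin) (hS : H * S = 0) :
    W * Wᴴ * S = S := by
  have hWW : (W * Wᴴ - 1) * W = 0 := by
    rw [Matrix.sub_mul, Matrix.mul_assoc, hW, Matrix.mul_one, Matrix.one_mul, sub_self]
  have := (range_mulVecLin_le_ker_mulVecLin_iff.mpr hS).trans
    (hker.trans (range_mulVecLin_le_ker_mulVecLin_iff.mpr hWW))
  rwa [range_mulVecLin_le_ker_mulVecLin_iff, Matrix.sub_mul, Matrix.one_mul, sub_eq_zero] at this

theorem IsHermitian.mul_mul_conjTranspose_eq_self {W : Matrix m l 𝕜} {S : Matrix m m 𝕜}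
    (hS : S.IsHermitian) (hWS : W * Wᴴ * S = S) : W * (Wᴴ * S * W) * Wᴴ = S := by
  have hSW : S * (W * Wᴴ) = S := by
    simpa only [conjTranspose_mul, conjTranspose_conjTranspose, hS.eq, Matrix.mul_assoc]
      using congrArg (·ᴴ) hWS
  calc W * (Wᴴ * S * W) * Wᴴ = W * Wᴴ * S * (W * Wᴴ) := by simp only [Matrix.mul_assoc]
    _ = S := by rw [hWS, hSW]

theorem IsHermitian.exists_unitary_conjTranspose_mul_mul_eq_diagonal [DecidableEq n]
    {B : Matrix n n 𝕜} (hB : B.IsHermitian) (e : n ≃ n) :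
    ∃ V ∈ unitaryGroup n 𝕜, Vᴴ * B * V = diagonal fun i => (hB.eigenvalues (e i) : 𝕜) := by
  set U : Matrix n n 𝕜 := (hB.eigenvectorUnitary : Matrix n n 𝕜)
  have hUB : Uᴴ * B * U = diagonal fun i => (hB.eigenvalues i : 𝕜) := by
    have h := hB.conjStarAlgAut_star_eigenvectorUnitary
    rwa [Unitary.conjStarAlgAut_apply, Unitary.coe_star, star_star] at h
  refine ⟨U.submatrix id e, ?_, ?_⟩
  · rw [mem_unitaryGroup_iff, star_eq_conjTranspose, conjTranspose_submatrix,
      submatrix_mul_equiv _ _ _ e, submatrix_id_id, ← star_eq_conjTranspose]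
    exact mem_unitaryGroup_iff.mp hB.eigenvectorUnitary.2
  · rw [conjTranspose_submatrix]
    calc _ = (Uᴴ * B * U).submatrix e e := by
          rw [← submatrix_mul_equiv _ _ _ (Equiv.refl n),
            ← submatrix_mul_equiv Uᴴ B e (Equiv.refl n) (Equiv.refl n)]
          rfl
      _ = _ := by rw [hUB, submatrix_diagonal_equiv]; rfl

theorem exists_ker_basis_conjTranspose_mul_mul_eq_diagonal [DecidableEq l] {W : Matrix m l 𝕜}
    {H : Matrix k m 𝕜} {A : Matrix n m 𝕜} (hW : Wᴴ * W = 1)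
    (hWH : LinearMap.range W.mulVecLin = LinearMap.ker H.mulVecLin)
    (hB : ((A * W)ᴴ * (A * W)).IsHermitian) (e : l ≃ l) :
    ∃ Z : Matrix m l 𝕜, Zᴴ * Z = 1 ∧ H * Z = 0 ∧
      LinearMap.ker H.mulVecLin ≤ LinearMap.range Z.mulVecLin ∧
      (A * Z)ᴴ * (A * Z) = diagonal fun i => (hB.eigenvalues (e i) : 𝕜) := by
  obtain ⟨V, hV, hVBV⟩ := hB.exists_unitary_conjTranspose_mul_mul_eq_diagonal e
  rw [← star_eq_conjTranspose] at hVBV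
  refine ⟨W * V, ?_, ?_, ?_, ?_⟩
  · rw [conjTranspose_mul, Matrix.mul_assoc, ← Matrix.mul_assoc Wᴴ, hW, Matrix.one_mul,
      ← star_eq_conjTranspose, mem_unitaryGroup_iff'.mp hV]
  · rw [← Matrix.mul_assoc, range_mulVecLin_le_ker_mulVecLin_iff.mp hWH.le, Matrix.zero_mul]
  · rw [← hWH]
    calc LinearMap.range W.mulVecLin
        = LinearMap.range ((W * V).mulVecLin ∘ₗ (star V).mulVecLin) := by
          rw [← mulVecLin_mul, Matrix.mul_assoc, mem_unitaryGroup_iff.mp hV, Matrix.mul_one]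
      _ ≤ _ := LinearMap.range_comp_le_range _ _
  · rw [← hVBV]
    simp only [conjTranspose_mul, star_eq_conjTranspose, Matrix.mul_assoc]

end Unitary

end Matrix

theorem semi_unitary_null_space_precoder_optimal_general
    (N M : ℕ)
    (H21 H22 : Matrix (Fin N) (Fin M) ℂ)
    (Ssq : Matrix (Fin N) (Fin N) ℂ)
    (hSsq : Ssq.PosDef)
    (W : Matrix (Fin M) (Fin (M - N)) ℂ)
    (hW : Wᴴ * W = 1)
    (hWspan : LinearMap.range W.mulVecLin = LinearMap.ker H21.mulVecLin)
    (G : Matrix (Fin N) (Fin (M - N)) ℂ)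
    (hGdef : G = Ssq⁻¹ * H22 * W)
    (hG : (Gᴴ * G).IsHermitian)
    (lam : Fin (M - N) → ℝ)
    (hnonneg : ∀ i, 0 ≤ lam i)
    (heig : ∃ e : Fin (M - N) ≃ Fin (M - N), ∀ i, lam i = hG.eigenvalues (e i))
    (P μ : ℝ) (hμ : 0 < μ)
    (p : Fin (M - N) → ℝ)
    (hp : ∀ i, p i = if 0 < lam i then max (μ - 1 / lam i) 0 else 0)
    (hpsum : ∑ i, p i = P) :
    (∀ S2 : Matrix (Fin M) (Fin M) ℂ, S2.PosSemidef → H21 * S2 = 0 →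
        S2.trace.re ≤ P →
        (1 + Ssq⁻¹ * H22 * S2 * H22ᴴ * Ssq⁻¹).det.re ≤ ∏ i, (1 + p i * lam i)) ∧
    ∃ Z : Matrix (Fin M) (Fin (M - N)) ℂ, Zᴴ * Z = 1 ∧ H21 * Z = 0 ∧
      (Z * Matrix.diagonal (fun i => (p i : ℂ)) * Zᴴ).trace.re ≤ P ∧
      (1 + Ssq⁻¹ * H22 * (Z * Matrix.diagonal (fun i => (p i : ℂ)) * Zᴴ) * H22ᴴ *
          Ssq⁻¹).det.re = ∏ i, (1 + p i * lam i) := by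
  obtain rfl : p = fun i => waterFilling μ (lam i) := funext hp
  beta_reduce at hpsum ⊢
  subst hGdef
  obtain ⟨e, he⟩ := heig
  obtain ⟨Z, hZZ, hH21Z, hker, hgram⟩ :=
    exists_ker_basis_conjTranspose_mul_mul_eq_diagonal hW hWspan hG e
  replace hgram : (Ssq⁻¹ * H22 * Z)ᴴ * (Ssq⁻¹ * H22 * Z) = diagonal fun i => (lam i : ℂ) := by
    simp only [he]; exact hgram
  have hdet : ∀ Q : Matrix (Fin (M - N)) (Fin (M - N)) ℂ,
      (1 + Ssq⁻¹ * H22 * (Z * Q * Zᴴ) * H22ᴴ * Ssq⁻¹).det =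
        (1 + Q * diagonal fun i => (lam i : ℂ)).det := fun Q => by
    rw [← hgram, ← det_one_add_mul_mul_conjTranspose]
    simp only [conjTranspose_mul, hSsq.isHermitian.inv.eq, Matrix.mul_assoc]
  refine ⟨fun S2 hS2 hH21S2 htr => ?_, Z, hZZ, hH21Z, ?_, ?_⟩
  · have hZS2 : Z * Zᴴ * S2 = S2 := mul_conjTranspose_mul_eq_self_of_mul_eq_zero hZZ hker hH21S2
    rw [← hS2.isHermitian.mul_mul_conjTranspose_eq_self hZS2, hdet]
    refine (hS2.conjTranspose_mul_mul_same Z).re_det_one_add_mul_diagonal_le_waterFilling hμ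
      hnonneg ?_
    rwa [trace_mul_cycle, hZS2, hpsum]
  · rw [trace_mul_cycle, hZZ, Matrix.one_mul, trace_diagonal, Complex.re_sum]
    simp [hpsum]
  · rw [hdet, diagonal_mul_diagonal, ← diagonal_one, diagonal_add, det_diagonal]
    norm_cast

/-- Proposition 2 (optimal interference cancellation precoder): in the cognitive
interference channel with `N < M ≤ 2N`, `H21` of full rank `N`, interference-plus-noise
covariance `Sξ = H12 * D1 * H12ᴴ + σ² • 1` with positive definite square root `Ssq`,
null-space basis `W` of `H21` with orthonormal columns, effective channel
`G = Ssq⁻¹ * H22 * W` with ordered eigenvalues `lam` of `Gᴴ * G`, and water-filling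
powers `p` summing to `P`:
(i) every positive semidefinite covariance `S2` with `H21 * S2 = 0` and `trace S2 ≤ P`
satisfies `det (1 + Ssq⁻¹ * H22 * S2 * H22ᴴ * Ssq⁻¹) ≤ ∏ i, (1 + p i * lam i)`; and
(ii) there is a semi-unitary `Z` (`Zᴴ * Z = 1`) with `H21 * Z = 0` whose induced
covariance `Z * diag p * Zᴴ` meets the power constraint and attains the bound. -/
theorem semi_unitary_null_space_precoder_optimal
    (N M : ℕ) (hNM : N < M) (hM2N : M ≤ 2 * N)
    (H21 H12 H22 : Matrix (Fin N) (Fin M) ℂ)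
    (hrank : H21.rank = N)
    (σ : ℝ) (hσ : 0 < σ)
    (d1 : Fin M → ℝ) (hd1 : ∀ i, 0 ≤ d1 i)
    (Sξ : Matrix (Fin N) (Fin N) ℂ)
    (hSξ : Sξ = H12 * Matrix.diagonal (fun i => (d1 i : ℂ)) * H12ᴴ + ((σ : ℂ) ^ 2) • 1)
    (Ssq : Matrix (Fin N) (Fin N) ℂ)
    (hSsq : Ssq.PosDef) (hSsq2 : Ssq * Ssq = Sξ)
    (W : Matrix (Fin M) (Fin (M - N)) ℂ)
    (hW : Wᴴ * W = 1)
    (hWspan : LinearMap.range W.mulVecLin = LinearMap.ker H21.mulVecLin)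
    (G : Matrix (Fin N) (Fin (M - N)) ℂ)
    (hGdef : G = Ssq⁻¹ * H22 * W)
    (hG : (Gᴴ * G).IsHermitian)
    (lam : Fin (M - N) → ℝ)
    (hmono : ∀ i j : Fin (M - N), i ≤ j → lam j ≤ lam i)
    (hnonneg : ∀ i, 0 ≤ lam i)
    (heig : ∃ e : Fin (M - N) ≃ Fin (M - N), ∀ i, lam i = hG.eigenvalues (e i))
    (hlam1 : 0 < lam ⟨0, Nat.sub_pos_of_lt hNM⟩)
    (P μ : ℝ) (hP : 0 < P) (hμ : 0 < μ)
    (p : Fin (M - N) → ℝ)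
    (hp : ∀ i, p i = if 0 < lam i then max (μ - 1 / lam i) 0 else 0)
    (hpsum : ∑ i, p i = P) :
    (∀ S2 : Matrix (Fin M) (Fin M) ℂ, S2.PosSemidef → H21 * S2 = 0 →
        S2.trace.re ≤ P →
        (1 + Ssq⁻¹ * H22 * S2 * H22ᴴ * Ssq⁻¹).det.re ≤ ∏ i, (1 + p i * lam i)) ∧
    ∃ Z : Matrix (Fin M) (Fin (M - N)) ℂ, Zᴴ * Z = 1 ∧ H21 * Z = 0 ∧
      (Z * Matrix.diagonal (fun i => (p i : ℂ)) * Zᴴ).trace.re ≤ P ∧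
      (1 + Ssq⁻¹ * H22 * (Z * Matrix.diagonal (fun i => (p i : ℂ)) * Zᴴ) * H22ᴴ *
          Ssq⁻¹).det.re = ∏ i, (1 + p i * lam i) :=
  semi_unitary_null_space_precoder_optimal_general N M H21 H22 Ssq hSsq W hW hWspan G hGdef hG lam
    hnonneg heig P μ hμ p hp hpsum
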